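/- Let H be a finite-dimensional Hopf algebra over k with bijective antipode S, and let L ⊆ H be a left coideal subalgebra that is also a left coideal of a Hopf subalgebra containing the grouplike elements, and R* ⊆ H* a right coideal of H*. If for all h ∈ L and α ∈ R* one has ⟨α, S⁻¹(h)⟩ = ε(α)ε(h) = ⟨α, h⟩, then in the Drinfel'd double D(H) the straightening formulas hold: h·α = ⟨α₍₂₎, h₍₁₎⟩ α₍₁₎ h₍₂₎ and α·h = ⟨α₍₂₎, S⁻¹(h₍₁₎)⟩ h₍₂₎ α₍₁₎; in particular the subspaces L and R* of D(H) are permutable: L·R* = R*·L. -/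

import Mathlib

/-!
In `D(H)` the rule `h α = ⟨α₍₃₎, h₍₁₎⟩ α₍₂₎ h₍₂₎ ⟨α₍₁₎, S⁻¹(h₍₃₎)⟩` pairs `α` with the leg `h₍₃₎`,
which lies in `L` because `L` is a left coideal. As `R*` is a right coideal,
`α(xy) = Σ β_t(x) γ_t(y)` with every `β_t ∈ R*`, so the pairing hypothesis turns `α(S⁻¹(z) · -)`
into `ε(z) α` for `z ∈ L`; the counit then absorbs `h₍₃₎`, leaving `h α = ⟨α₍₂₎, h₍₁₎⟩ α₍₁₎ h₍₂₎`.
The same decomposition shows that `R*` is stable under the right translations `α ↦ α(- · x)`,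
so each straightening formula rewrites a product from `L` and `R*` as a sum of products in the
opposite order.
-/
open TensorProduct

/-- The iterated comultiplication `H → H ⊗ (H ⊗ H)`, `h ↦ h₍₁₎ ⊗ h₍₂₎ ⊗ h₍₃₎`. -/
noncomputable def comul2 (k H : Type) [Field k] [Ring H] [HopfAlgebra k H] :
    H →ₗ[k] H ⊗[k] (H ⊗[k] H) :=
  (LinearMap.lTensor H (Coalgebra.comul (R := k) (A := H))).comp
    (Coalgebra.comul (R := k) (A := H))

/-- The comultiplication on the dual `H*` of a finite-dimensional Hopf algebra `H`,
dual to the multiplication of `H`: `⟨Δ(α), x ⊗ y⟩ = α(xy)`. -/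
noncomputable def comulDual (k H : Type) [Field k] [Ring H] [HopfAlgebra k H]
    [FiniteDimensional k H] :
    Module.Dual k H →ₗ[k] Module.Dual k H ⊗[k] Module.Dual k H :=
  (TensorProduct.dualDistribEquiv k H H).symm.toLinearMap ∘ₗ
    (LinearMap.mul' k H).dualMap

namespace TensorProduct

variable {R M N P : Type*} [CommSemiring R] [AddCommMonoid M] [AddCommMonoid N]
  [AddCommMonoid P] [Module R M] [Module R N] [Module R P]

theorem exists_fin_sum_tmul (x : M ⊗[R] N) :
    ∃ (n : ℕ) (a : Fin n → M) (b : Fin n → N), x = ∑ i, a i ⊗ₜ[R] b i := by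
  induction x with
  | zero => exact ⟨0, Fin.elim0, Fin.elim0, by simp⟩
  | tmul m n => exact ⟨1, fun _ => m, fun _ => n, by simp⟩
  | add x y hx hy =>
    obtain ⟨n, a, b, rfl⟩ := hx
    obtain ⟨m, c, d, rfl⟩ := hy
    exact ⟨n + m, Fin.append a c, Fin.append b d, by simp [Fin.sum_univ_add]⟩

theorem exists_fin_sum_tmul_tmul (x : M ⊗[R] (N ⊗[R] P)) :
    ∃ (n : ℕ) (a : Fin n → M) (b : Fin n → N) (c : Fin n → P),
      x = ∑ i, a i ⊗ₜ[R] (b i ⊗ₜ[R] c i) := by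
  induction x with
  | zero => exact ⟨0, Fin.elim0, Fin.elim0, Fin.elim0, by simp⟩
  | tmul m t =>
    obtain ⟨n, b, c, rfl⟩ := exists_fin_sum_tmul t
    exact ⟨n, fun _ => m, b, c, tmul_sum _ _ _⟩
  | add x y hx hy =>
    obtain ⟨n, a, b, c, rfl⟩ := hx
    obtain ⟨m, a', b', c', rfl⟩ := hy
    exact ⟨n + m, Fin.append a a', Fin.append b b', Fin.append c c',
      by simp [Fin.sum_univ_add]⟩

theorem exists_fin_sum_tmul_of_mem_range_lTensor (p : Submodule R N) {x : M ⊗[R] N}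
    (hx : x ∈ LinearMap.range (LinearMap.lTensor M p.subtype)) :
    ∃ (n : ℕ) (a : Fin n → M) (b : Fin n → N), (∀ i, b i ∈ p) ∧ x = ∑ i, a i ⊗ₜ[R] b i := by
  obtain ⟨w, rfl⟩ := hx
  obtain ⟨n, a, b, rfl⟩ := exists_fin_sum_tmul w
  exact ⟨n, a, fun i => b i, fun i => (b i).2, by simp⟩

theorem exists_fin_sum_tmul_of_mem_range_rTensor (p : Submodule R M) {x : M ⊗[R] N}
    (hx : x ∈ LinearMap.range (LinearMap.rTensor N p.subtype)) :
    ∃ (n : ℕ) (a : Fin n → M) (b : Fin n → N), (∀ i, a i ∈ p) ∧ x = ∑ i, a i ⊗ₜ[R] b i := by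
  obtain ⟨w, rfl⟩ := hx
  obtain ⟨n, a, b, rfl⟩ := exists_fin_sum_tmul w
  exact ⟨n, fun i => a i, b, fun i => (a i).2, by simp⟩

theorem exists_fin_sum_tmul_tmul_of_mem_range (p : Submodule R P) {x : M ⊗[R] (N ⊗[R] P)}
    (hx : x ∈ LinearMap.range (LinearMap.lTensor M (LinearMap.lTensor N p.subtype))) :
    ∃ (n : ℕ) (a : Fin n → M) (b : Fin n → N) (c : Fin n → P),
      (∀ i, c i ∈ p) ∧ x = ∑ i, a i ⊗ₜ[R] (b i ⊗ₜ[R] c i) := by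
  obtain ⟨w, rfl⟩ := hx
  obtain ⟨n, a, b, c, rfl⟩ := exists_fin_sum_tmul_tmul w
  exact ⟨n, a, b, fun i => c i, fun i => (c i).2, by simp⟩

end TensorProduct

theorem LinearMap.range_lTensor_mono {R M N P Q : Type*} [CommSemiring R] [AddCommMonoid M]
    [AddCommMonoid N] [AddCommMonoid P] [AddCommMonoid Q] [Module R M] [Module R N]
    [Module R P] [Module R Q] {f : M →ₗ[R] P} {g : N →ₗ[R] P} (hfg : range f ≤ range g) :
    range (lTensor Q f) ≤ range (lTensor Q g) := by
  rw [lTensor_range, lTensor_range Q (g := g),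
    show (range f).subtype = (range g).subtype ∘ₗ Submodule.inclusion hfg from rfl, lTensor_comp]
  exact range_comp_le_range _ _

def IsLeftCoideal {R C : Type*} [CommSemiring R] [AddCommMonoid C] [Module R C]
    [CoalgebraStruct R C] (p : Submodule R C) : Prop :=
  ∀ c ∈ p, Coalgebra.comul (R := R) c ∈ LinearMap.range (LinearMap.lTensor C p.subtype)

section Coideal

variable {k H : Type} [Field k] [Ring H] [HopfAlgebra k H]

theorem IsLeftCoideal.comul2_mem {p : Submodule k H} (hp : IsLeftCoideal p) {c : H}
    (hc : c ∈ p) :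
    comul2 k H c ∈ LinearMap.range (LinearMap.lTensor H (LinearMap.lTensor H p.subtype)) := by
  obtain ⟨w, hw⟩ := hp c hc
  have hle : LinearMap.range (Coalgebra.comul ∘ₗ p.subtype) ≤
      LinearMap.range (LinearMap.lTensor H p.subtype) := by
    rintro _ ⟨l, rfl⟩
    exact hp l l.2
  refine LinearMap.range_lTensor_mono hle ⟨w, ?_⟩
  rw [LinearMap.lTensor_comp, LinearMap.comp_apply, hw]
  rfl

theorem lTensor_counit_comul2 (c : H) :
    LinearMap.lTensor H (TensorProduct.rid k H ∘ₗ LinearMap.lTensor H Coalgebra.counit)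
      (comul2 k H c) = Coalgebra.comul (R := k) c := by
  have hcounit : (TensorProduct.rid k H ∘ₗ LinearMap.lTensor H Coalgebra.counit) ∘ₗ
      Coalgebra.comul (R := k) (A := H) = LinearMap.id := by
    ext a
    simp [Coalgebra.lTensor_counit_comul]
  rw [comul2, ← LinearMap.comp_apply, ← LinearMap.comp_assoc, ← LinearMap.lTensor_comp, hcounit,
    LinearMap.lTensor_id, LinearMap.id_comp]

theorem sum_counit_smul_eq_sum {M : Type*} [AddCommMonoid M] [Module k M]
    (B : H ⊗[k] H →ₗ[k] M) {c : H} {n : ℕ} {x y z : Fin n → H}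
    (h3 : comul2 k H c = ∑ i, x i ⊗ₜ[k] (y i ⊗ₜ[k] z i)) {m : ℕ} {a b : Fin m → H}
    (h2 : Coalgebra.comul (R := k) c = ∑ j, a j ⊗ₜ[k] b j) :
    ∑ i, Coalgebra.counit (R := k) (z i) • B (x i ⊗ₜ[k] y i) = ∑ j, B (a j ⊗ₜ[k] b j) := by
  have := congrArg (B ∘ₗ LinearMap.lTensor H
    (TensorProduct.rid k H ∘ₗ LinearMap.lTensor H Coalgebra.counit)) h3
  simpa [lTensor_counit_comul2, h2] using this.symm

end Coideal

section Dual

variable {k H : Type} [Field k] [Ring H] [HopfAlgebra k H] [FiniteDimensional k H]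

theorem dualDistrib_comulDual_tmul (α : Module.Dual k H) (x y : H) :
    TensorProduct.dualDistrib k H H (comulDual k H α) (x ⊗ₜ[k] y) = α (x * y) := by
  change TensorProduct.dualDistribEquiv k H H
    ((TensorProduct.dualDistribEquiv k H H).symm ((LinearMap.mul' k H).dualMap α)) _ = _
  rw [LinearEquiv.apply_symm_apply]
  rfl

def IsDualRightCoideal (R : Submodule k (Module.Dual k H)) : Prop :=
  ∀ α ∈ R, comulDual k H α ∈ LinearMap.range (LinearMap.rTensor (Module.Dual k H) R.subtype)

namespace IsDualRightCoideal

variable {R : Submodule k (Module.Dual k H)}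

theorem exists_sum_apply_mul (hR : IsDualRightCoideal R) {α : Module.Dual k H} (hα : α ∈ R) :
    ∃ (n : ℕ) (β γ : Fin n → Module.Dual k H), (∀ t, β t ∈ R) ∧
      ∀ x y : H, α (x * y) = ∑ t, β t x * γ t y := by
  obtain ⟨n, β, γ, hβ, hrep⟩ :=
    TensorProduct.exists_fin_sum_tmul_of_mem_range_rTensor R (hR α hα)
  refine ⟨n, β, γ, hβ, fun x y => ?_⟩
  rw [← dualDistrib_comulDual_tmul, hrep]
  simp

theorem comp_mulRight_mem (hR : IsDualRightCoideal R) {α : Module.Dual k H} (hα : α ∈ R)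
    (x : H) :
    α ∘ₗ LinearMap.mulRight k x ∈ R := by
  obtain ⟨n, β, γ, hβ, hrep⟩ := hR.exists_sum_apply_mul hα
  have : α ∘ₗ LinearMap.mulRight k x = ∑ t, γ t x • β t := by
    ext m
    simp [hrep, mul_comm]
  rw [this]
  exact Submodule.sum_mem _ fun t _ => Submodule.smul_mem _ _ (hβ t)

theorem comp_mulLeft_eq_smul (hR : IsDualRightCoideal R) {α : Module.Dual k H} (hα : α ∈ R)
    {a : H} {c : k} (ha : ∀ β ∈ R, β a = β 1 * c) : α ∘ₗ LinearMap.mulLeft k a = c • α := by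
  obtain ⟨n, β, γ, hβ, hrep⟩ := hR.exists_sum_apply_mul hα
  ext m
  calc α (a * m) = ∑ t, β t a * γ t m := hrep a m
    _ = c * ∑ t, β t 1 * γ t m := by
      rw [Finset.mul_sum]
      refine Finset.sum_congr rfl fun t _ => ?_
      rw [ha _ (hβ t)]
      ring
    _ = c * α m := by rw [← hrep, one_mul]

end IsDualRightCoideal

end Dual

section Double

variable {k H D : Type} [Field k] [Ring H] [HopfAlgebra k H] [Ring D] [Algebra k D]
  (ιH : H →ₗ[k] D) (ιA : Module.Dual k H →ₗ[k] D) (Sinv : H →ₗ[k] H)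

theorem hopf_mul_dual_eq_sum {L : Submodule k H} (hL : IsLeftCoideal L) {h : H} (hh : h ∈ L)
    {α : Module.Dual k H}
    (hmul : ∀ (n : ℕ) (h1 h2 h3 : Fin n → H),
      comul2 k H h = ∑ i, h1 i ⊗ₜ[k] (h2 i ⊗ₜ[k] h3 i) →
      ιH h * ιA α = ∑ i,
        ιA (α ∘ₗ LinearMap.mulLeft k (Sinv (h3 i)) ∘ₗ LinearMap.mulRight k (h1 i)) * ιH (h2 i))
    (hα : ∀ z ∈ L, α ∘ₗ LinearMap.mulLeft k (Sinv z) = Coalgebra.counit (R := k) z • α) :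
    ∀ (n : ℕ) (h1 h2 : Fin n → H), Coalgebra.comul (R := k) h = ∑ i, h1 i ⊗ₜ[k] h2 i →
    ιH h * ιA α = ∑ i, ιA (α ∘ₗ LinearMap.mulRight k (h1 i)) * ιH (h2 i) := by
  intro n h1 h2 hrep
  -- `B (x ⊗ y) = ιA (α (- * x)) * ιH y`
  let B : H ⊗[k] H →ₗ[k] D := TensorProduct.lift
    ((LinearMap.mul k D).compl₁₂ (ιA ∘ₗ (LinearMap.mul k H).flip.compr₂ α) ιH)
  obtain ⟨m, x, y, z, hz, h3⟩ :=
    TensorProduct.exists_fin_sum_tmul_tmul_of_mem_range L (hL.comul2_mem hh)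
  calc ιH h * ιA α = ∑ i, Coalgebra.counit (R := k) (z i) • B (x i ⊗ₜ[k] y i) := by
        rw [hmul m x y z h3]
        refine Finset.sum_congr rfl fun i _ => ?_
        rw [← LinearMap.comp_assoc, hα _ (hz i), LinearMap.smul_comp, map_smul, smul_mul_assoc]
        rfl
    _ = ∑ i, B (h1 i ⊗ₜ[k] h2 i) := sum_counit_smul_eq_sum B h3 hrep
    _ = _ := rfl

theorem dual_mul_hopf_eq_sum {L : Submodule k H} (hL : IsLeftCoideal L) {h : H} (hh : h ∈ L)
    {α : Module.Dual k H}
    (hmul : ∀ (n : ℕ) (h1 h2 h3 : Fin n → H),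
      comul2 k H h = ∑ i, h1 i ⊗ₜ[k] (h2 i ⊗ₜ[k] h3 i) →
      ιA α * ιH h = ∑ i,
        ιH (h2 i) * ιA (α ∘ₗ LinearMap.mulLeft k (h3 i) ∘ₗ LinearMap.mulRight k (Sinv (h1 i))))
    (hα : ∀ z ∈ L, α ∘ₗ LinearMap.mulLeft k z = Coalgebra.counit (R := k) z • α) :
    ∀ (n : ℕ) (h1 h2 : Fin n → H), Coalgebra.comul (R := k) h = ∑ i, h1 i ⊗ₜ[k] h2 i →
    ιA α * ιH h = ∑ i, ιH (h2 i) * ιA (α ∘ₗ LinearMap.mulRight k (Sinv (h1 i))) := by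
  intro n h1 h2 hrep
  -- `B (x ⊗ y) = ιH y * ιA (α (- * S⁻¹ x))`
  let B : H ⊗[k] H →ₗ[k] D := TensorProduct.lift
    ((LinearMap.mul k D).flip.compl₁₂ (ιA ∘ₗ (LinearMap.mul k H).flip.compr₂ α ∘ₗ Sinv) ιH)
  obtain ⟨m, x, y, z, hz, h3⟩ :=
    TensorProduct.exists_fin_sum_tmul_tmul_of_mem_range L (hL.comul2_mem hh)
  calc ιA α * ιH h = ∑ i, Coalgebra.counit (R := k) (z i) • B (x i ⊗ₜ[k] y i) := by
        rw [hmul m x y z h3]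
        refine Finset.sum_congr rfl fun i _ => ?_
        rw [← LinearMap.comp_assoc, hα _ (hz i), LinearMap.smul_comp, map_smul, mul_smul_comm]
        rfl
    _ = ∑ i, B (h1 i ⊗ₜ[k] h2 i) := sum_counit_smul_eq_sum B h3 hrep
    _ = _ := rfl

end Double

section Permutable

variable {k H D : Type} [Field k] [Ring H] [HopfAlgebra k H] [Ring D] [Algebra k D]
  (ιH : H →ₗ[k] D) (ιA : Module.Dual k H →ₗ[k] D)

theorem map_hopf_mul_map_dual_le {L : Submodule k H} (hL : IsLeftCoideal L)
    {R : Submodule k (Module.Dual k H)} (hR : ∀ α ∈ R, ∀ x, α ∘ₗ LinearMap.mulRight k x ∈ R)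
    (f : H → H) (hstraight : ∀ h ∈ L, ∀ α ∈ R, ∀ (n : ℕ) (h1 h2 : Fin n → H),
      Coalgebra.comul (R := k) h = ∑ i, h1 i ⊗ₜ[k] h2 i →
      ιH h * ιA α = ∑ i, ιA (α ∘ₗ LinearMap.mulRight k (f (h1 i))) * ιH (h2 i)) :
    L.map ιH * R.map ιA ≤ R.map ιA * L.map ιH := by
  rw [Submodule.mul_le]
  rintro _ ⟨h, hh, rfl⟩ _ ⟨α, hα, rfl⟩
  obtain ⟨n, h1, h2, hh2, hrep⟩ :=
    TensorProduct.exists_fin_sum_tmul_of_mem_range_lTensor L (hL h hh)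
  rw [hstraight h hh α hα n h1 h2 hrep]
  exact Submodule.sum_mem _ fun i _ =>
    Submodule.mul_mem_mul ⟨_, hR α hα _, rfl⟩ ⟨_, hh2 i, rfl⟩

theorem map_dual_mul_map_hopf_le {L : Submodule k H} (hL : IsLeftCoideal L)
    {R : Submodule k (Module.Dual k H)} (hR : ∀ α ∈ R, ∀ x, α ∘ₗ LinearMap.mulRight k x ∈ R)
    (f : H → H) (hstraight : ∀ h ∈ L, ∀ α ∈ R, ∀ (n : ℕ) (h1 h2 : Fin n → H),
      Coalgebra.comul (R := k) h = ∑ i, h1 i ⊗ₜ[k] h2 i →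
      ιA α * ιH h = ∑ i, ιH (h2 i) * ιA (α ∘ₗ LinearMap.mulRight k (f (h1 i)))) :
    R.map ιA * L.map ιH ≤ L.map ιH * R.map ιA := by
  rw [Submodule.mul_le]
  rintro _ ⟨α, hα, rfl⟩ _ ⟨h, hh, rfl⟩
  obtain ⟨n, h1, h2, hh2, hrep⟩ :=
    TensorProduct.exists_fin_sum_tmul_of_mem_range_lTensor L (hL h hh)
  rw [hstraight h hh α hα n h1 h2 hrep]
  exact Submodule.sum_mem _ fun i _ =>
    Submodule.mul_mem_mul ⟨_, hh2 i, rfl⟩ ⟨_, hR α hα _, rfl⟩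

end Permutable

theorem stmt15_general (k H D : Type) [Field k] [Ring H] [HopfAlgebra k H]
    [FiniteDimensional k H] [Ring D] [Algebra k D]
    (ιH : H →ₐ[k] D) (ιA : Module.Dual k H →ₗ[k] D)
    (Sinv : H →ₗ[k] H)
    (hmul : ∀ (h : H) (α : Module.Dual k H) (n : ℕ) (h1 h2 h3 : Fin n → H),
      comul2 k H h = ∑ i, h1 i ⊗ₜ[k] (h2 i ⊗ₜ[k] h3 i) →
      ιH h * ιA α = ∑ i,
        ιA (α ∘ₗ LinearMap.mulLeft k (Sinv (h3 i)) ∘ₗ LinearMap.mulRight k (h1 i)) *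
          ιH (h2 i))
    (hmul' : ∀ (h : H) (α : Module.Dual k H) (n : ℕ) (h1 h2 h3 : Fin n → H),
      comul2 k H h = ∑ i, h1 i ⊗ₜ[k] (h2 i ⊗ₜ[k] h3 i) →
      ιA α * ιH h = ∑ i,
        ιH (h2 i) *
          ιA (α ∘ₗ LinearMap.mulLeft k (h3 i) ∘ₗ LinearMap.mulRight k (Sinv (h1 i))))
    (L : Subalgebra k H) (Rs : Submodule k (Module.Dual k H))
    (hLco : ∀ h ∈ L, Coalgebra.comul (R := k) h ∈
      LinearMap.range (LinearMap.lTensor H (Subalgebra.toSubmodule L).subtype))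
    (hRco : ∀ α ∈ Rs, comulDual k H α ∈
      LinearMap.range (LinearMap.rTensor (Module.Dual k H) Rs.subtype))
    (hpair : ∀ h ∈ L, ∀ α ∈ Rs,
      α (Sinv h) = α 1 * Coalgebra.counit (R := k) h ∧
      α h = α 1 * Coalgebra.counit (R := k) h) :
    (∀ h ∈ L, ∀ α ∈ Rs, ∀ (n : ℕ) (h1 h2 : Fin n → H),
      Coalgebra.comul (R := k) h = ∑ i, h1 i ⊗ₜ[k] h2 i →
      ιH h * ιA α = ∑ i, ιA (α ∘ₗ LinearMap.mulRight k (h1 i)) * ιH (h2 i)) ∧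
    (∀ h ∈ L, ∀ α ∈ Rs, ∀ (n : ℕ) (h1 h2 : Fin n → H),
      Coalgebra.comul (R := k) h = ∑ i, h1 i ⊗ₜ[k] h2 i →
      ιA α * ιH h = ∑ i, ιH (h2 i) * ιA (α ∘ₗ LinearMap.mulRight k (Sinv (h1 i)))) ∧
    Submodule.map ιH.toLinearMap (Subalgebra.toSubmodule L) * Submodule.map ιA Rs =
      Submodule.map ιA Rs * Submodule.map ιH.toLinearMap (Subalgebra.toSubmodule L) := by
  have hL : IsLeftCoideal (Subalgebra.toSubmodule L) := hLco
  have hR : IsDualRightCoideal Rs := hRco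
  have straighten := fun h (hh : h ∈ L) α (hα : α ∈ Rs) =>
    hopf_mul_dual_eq_sum ιH.toLinearMap ιA Sinv hL hh (hmul h α) fun z hz =>
      hR.comp_mulLeft_eq_smul hα fun β hβ => (hpair z hz β hβ).1
  have straighten' := fun h (hh : h ∈ L) α (hα : α ∈ Rs) =>
    dual_mul_hopf_eq_sum ιH.toLinearMap ιA Sinv hL hh (hmul' h α) fun z hz =>
      hR.comp_mulLeft_eq_smul hα fun β hβ => (hpair z hz β hβ).2
  have hRs : ∀ α ∈ Rs, ∀ x, α ∘ₗ LinearMap.mulRight k x ∈ Rs := fun _ hα =>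
    hR.comp_mulRight_mem hα
  exact ⟨straighten, straighten', le_antisymm
    (map_hopf_mul_map_dual_le ιH.toLinearMap ιA hL hRs id straighten)
    (map_dual_mul_map_hopf_le ιH.toLinearMap ιA hL hRs Sinv straighten')⟩

/-- In the Drinfel'd double `D(H)` of a finite-dimensional Hopf algebra `H`, if `L ⊆ H`
is a left coideal subalgebra and `R* ⊆ H*` a right coideal with
`⟨α, S⁻¹(h)⟩ = ε(α)ε(h) = ⟨α, h⟩` for all `h ∈ L`, `α ∈ R*`, then the straightening
formulas hold: `h·α = ⟨α₍₂₎, h₍₁₎⟩ α₍₁₎ h₍₂₎` and `α·h = ⟨α₍₂₎, S⁻¹(h₍₁₎)⟩ h₍₂₎ α₍₁₎`;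
in particular `L` and `R*` are permutable in `D(H)`: `L·R* = R*·L`. -/
theorem stmt15 (k H D : Type) [Field k] [Ring H] [HopfAlgebra k H]
    [FiniteDimensional k H] [Ring D] [Algebra k D]
    (ιH : H →ₐ[k] D) (ιA : Module.Dual k H →ₗ[k] D)
    (hιH : Function.Injective ιH) (hιA : Function.Injective ιA)
    (Sinv : H →ₗ[k] H)
    (hS1 : ∀ h : H, Sinv (HopfAlgebra.antipode (R := k) h) = h)
    (hS2 : ∀ h : H, HopfAlgebra.antipode (R := k) (Sinv h) = h)
    (hmul : ∀ (h : H) (α : Module.Dual k H) (n : ℕ) (h1 h2 h3 : Fin n → H),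
      comul2 k H h = ∑ i, h1 i ⊗ₜ[k] (h2 i ⊗ₜ[k] h3 i) →
      ιH h * ιA α = ∑ i,
        ιA (α ∘ₗ LinearMap.mulLeft k (Sinv (h3 i)) ∘ₗ LinearMap.mulRight k (h1 i)) *
          ιH (h2 i))
    (hmul' : ∀ (h : H) (α : Module.Dual k H) (n : ℕ) (h1 h2 h3 : Fin n → H),
      comul2 k H h = ∑ i, h1 i ⊗ₜ[k] (h2 i ⊗ₜ[k] h3 i) →
      ιA α * ιH h = ∑ i,
        ιH (h2 i) *
          ιA (α ∘ₗ LinearMap.mulLeft k (h3 i) ∘ₗ LinearMap.mulRight k (Sinv (h1 i))))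
    (L : Subalgebra k H) (Rs : Submodule k (Module.Dual k H))
    (hLco : ∀ h ∈ L, Coalgebra.comul (R := k) h ∈
      LinearMap.range (LinearMap.lTensor H (Subalgebra.toSubmodule L).subtype))
    (hRco : ∀ α ∈ Rs, comulDual k H α ∈
      LinearMap.range (LinearMap.rTensor (Module.Dual k H) Rs.subtype))
    (hpair : ∀ h ∈ L, ∀ α ∈ Rs,
      α (Sinv h) = α 1 * Coalgebra.counit (R := k) h ∧
      α h = α 1 * Coalgebra.counit (R := k) h) :
    (∀ h ∈ L, ∀ α ∈ Rs, ∀ (n : ℕ) (h1 h2 : Fin n → H),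
      Coalgebra.comul (R := k) h = ∑ i, h1 i ⊗ₜ[k] h2 i →
      ιH h * ιA α = ∑ i, ιA (α ∘ₗ LinearMap.mulRight k (h1 i)) * ιH (h2 i)) ∧
    (∀ h ∈ L, ∀ α ∈ Rs, ∀ (n : ℕ) (h1 h2 : Fin n → H),
      Coalgebra.comul (R := k) h = ∑ i, h1 i ⊗ₜ[k] h2 i →
      ιA α * ιH h = ∑ i, ιH (h2 i) * ιA (α ∘ₗ LinearMap.mulRight k (Sinv (h1 i)))) ∧
    Submodule.map ιH.toLinearMap (Subalgebra.toSubmodule L) * Submodule.map ιA Rs =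
      Submodule.map ιA Rs * Submodule.map ιH.toLinearMap (Subalgebra.toSubmodule L) :=
  stmt15_general k H D ιH ιA Sinv hmul hmul' L Rs hLco hRco hpair
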